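/- For any arithmetic functions a, r, any large L, T satisfying L ≤ T/(log T)², and any 0 < h ≤ 1, 𝓘₁(T;R_L,A) = Φ̂_T(0)·∑_{km, ln ≤ L, km = ln} (a(k)·conj(a(l))/√(kl))·(r(m)·conj(r(n))/√(mn)) + O( (1/T)·∑_{k ≤ L} |a(k)|²/k · ∑_{n ≤ L} |r(n)|²/n ). -/

import Mathlib

open MeasureTheory Filter Finset
open scoped Real ComplexConjugate Classical

noncomputable section


/-- The Gaussian weight `Φ(t) = e^{-t²/2}`. -/
def Phi (t : ℝ) : ℝ := Real.exp (-t ^ 2 / 2)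

/-- The smooth weight `Φ_T(t) = Φ((t - 3T/2)/(T/log T))`. -/
def PhiT (T t : ℝ) : ℝ := Phi ((t - 3 * T / 2) / (T / Real.log T))

/-- `Φ̂_T(0) = ∫_ℝ Φ_T(t) dt`. -/
def PhiHat0 (T : ℝ) : ℝ := ∫ t : ℝ, PhiT T t

/-- The resonator Dirichlet polynomial `R_L(s) = ∑_{n ≤ L} r(n) n^{-s}`. -/
def RL (r : ℕ → ℂ) (L : ℝ) (s : ℂ) : ℂ :=
  ∑ n ∈ Icc 1 ⌊L⌋₊, r n * (n : ℂ) ^ (-s)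

/-- The approximator Dirichlet polynomial `A_X(s) = ∑_{n ≤ X} a(n) n^{-s}`. -/
def AX (a : ℕ → ℂ) (X : ℝ) (s : ℂ) : ℂ :=
  ∑ n ∈ Icc 1 ⌊X⌋₊, a n * (n : ℂ) ^ (-s)

/-- `g_h(k)`: the `k`-th Dirichlet coefficient of `log ζ(s + ih/2) - log ζ(s - ih/2)`;
`g_h(1) = 0` and `g_h(k) = -2i Λ(k) sin((h/2) log k)/log k` for `k ≥ 2`.
(The formula below gives `0` at `k = 0, 1` since `Λ(k) = 0` there.) -/
def gh (h : ℝ) (k : ℕ) : ℂ :=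
  -2 * Complex.I * (ArithmeticFunction.vonMangoldt k : ℝ) *
    (Real.sin (h / 2 * Real.log k) : ℝ) / (Real.log k : ℝ)

/-- The zero-counting function `N(T)`: the number of zeros `ρ = β + iγ` of `ζ` with
`0 < γ < |T|`, with the convention `N(T) = (N(T⁺) + N(T⁻))/2` at jump points, i.e.
zeros with ordinate exactly `|T|` are counted with weight `1/2`. -/
def Nzeros (T : ℝ) : ℝ :=
  (({ρ : ℂ | riemannZeta ρ = 0 ∧ 0 < ρ.re ∧ ρ.re < 1 ∧ 0 < ρ.im ∧ ρ.im < |T|}).ncard : ℝ) +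
  (1 / 2) * (({ρ : ℂ | riemannZeta ρ = 0 ∧ 0 < ρ.re ∧ ρ.re < 1 ∧ ρ.im = |T|}).ncard : ℝ)

/-- `N_h(t) = N(t + h/2) - N(t - h/2)`. -/
def Nh (h t : ℝ) : ℝ := Nzeros (t + h / 2) - Nzeros (t - h / 2)

/-- `log ζ(σ + it) = ∫_∞^σ (ζ'/ζ)(α + it) dα` (for generic `t`). -/
def logZetaAux (σ t : ℝ) : ℂ :=
  -∫ α in Set.Ioi σ, deriv riemannZeta (α + t * Complex.I) / riemannZeta (α + t * Complex.I)

/-- The branch of `log ζ` used throughout: `log ζ(σ + it) = ∫_∞^σ (ζ'/ζ)(α + it) dα`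
when `t` is neither `0` nor the imaginary part of a zero of `ζ`, and the average of the
two one-sided limits otherwise. -/
def logZeta (s : ℂ) : ℂ :=
  if s.im ≠ 0 ∧ ∀ ρ : ℂ, riemannZeta ρ = 0 → ρ.im ≠ s.im then logZetaAux s.re s.im
  else
    (limUnder (nhdsWithin s.im (Set.Ioi s.im)) (fun t : ℝ => logZetaAux s.re t) +
      limUnder (nhdsWithin s.im (Set.Iio s.im)) (fun t : ℝ => logZetaAux s.re t)) / 2

/-- `S(t) = (1/π) Im log ζ(1/2 + it)`. -/
def Sfun (t : ℝ) : ℝ := (1 / Real.pi) * (logZeta (1 / 2 + t * Complex.I)).im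

/-- `M₁(T, h; R_L) = ∫ N_h(t) |R_L(1/2 + it)|² Φ_T(t) dt`. -/
def M1 (r : ℕ → ℂ) (T h L : ℝ) : ℝ :=
  ∫ t : ℝ, Nh h t * norm (RL r L (1 / 2 + t * Complex.I)) ^ 2 * PhiT T t

/-- `M₂(T, h; R_L) = ∫ N_h(t)² |R_L(1/2 + it)|² Φ_T(t) dt`. -/
def M2 (r : ℕ → ℂ) (T h L : ℝ) : ℝ :=
  ∫ t : ℝ, Nh h t ^ 2 * norm (RL r L (1 / 2 + t * Complex.I)) ^ 2 * PhiT T t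

/-- `∑_{n ≤ L} |r(n)|²/n`. -/
def S1 (r : ℕ → ℂ) (L : ℝ) : ℝ := ∑ n ∈ Icc 1 ⌊L⌋₊, norm (r n) ^ 2 / n

/-- `∑_{km ≤ L} (g_h(k)/k) (r(m) conj(r(km))/m)`. -/
def sumKM (h : ℝ) (r : ℕ → ℂ) (L : ℝ) : ℂ :=
  ∑ p ∈ (Icc 1 ⌊L⌋₊ ×ˢ Icc 1 ⌊L⌋₊).filter (fun p => p.1 * p.2 ≤ ⌊L⌋₊),
    gh h p.1 / (p.1 : ℂ) * (r p.2 * conj (r (p.1 * p.2)) / (p.2 : ℂ))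

/-- `∑_{km, ln ≤ L, km = ln} ((2g_h(k) - a(k)) conj(a(l))/√(kl)) (r(m) conj(r(n))/√(mn))`;
the index is `q = ((k, m), (l, n))`. -/
def sumDiag (h : ℝ) (a r : ℕ → ℂ) (L : ℝ) : ℂ :=
  ∑ q ∈ ((Icc 1 ⌊L⌋₊ ×ˢ Icc 1 ⌊L⌋₊) ×ˢ (Icc 1 ⌊L⌋₊ ×ˢ Icc 1 ⌊L⌋₊)).filter
      (fun q => q.1.1 * q.1.2 ≤ ⌊L⌋₊ ∧ q.2.1 * q.2.2 ≤ ⌊L⌋₊ ∧ q.1.1 * q.1.2 = q.2.1 * q.2.2),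
    (2 * gh h q.1.1 - a q.1.1) * conj (a q.2.1) /
        ((Real.sqrt ((q.1.1 * q.2.1 : ℕ) : ℝ) : ℝ) : ℂ) *
      (r q.1.2 * conj (r q.2.2) / ((Real.sqrt ((q.1.2 * q.2.2 : ℕ) : ℝ) : ℝ) : ℂ))

/-- `∑_{klm ≤ L} (g_h(k) g_h(l)/(kl)) (r(m) conj(r(klm))/m)`; the index is `q = (k, l, m)`. -/
def sumTriple (h : ℝ) (r : ℕ → ℂ) (L : ℝ) : ℂ :=
  ∑ q ∈ (Icc 1 ⌊L⌋₊ ×ˢ Icc 1 ⌊L⌋₊ ×ˢ Icc 1 ⌊L⌋₊).filter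
      (fun q => q.1 * q.2.1 * q.2.2 ≤ ⌊L⌋₊),
    gh h q.1 * gh h q.2.1 / ((q.1 : ℂ) * (q.2.1 : ℂ)) *
      (r q.2.2 * conj (r (q.1 * q.2.1 * q.2.2)) / (q.2.2 : ℂ))

/-- `𝓘(T, h; R_L)`. -/
def calI (r : ℕ → ℂ) (T h L : ℝ) : ℝ :=
  ∫ t : ℝ,
    norm (logZeta (1 / 2 + (t + h / 2) * Complex.I) -
        logZeta (1 / 2 + (t - h / 2) * Complex.I)) ^ 2 *
      norm (RL r L (1 / 2 + t * Complex.I)) ^ 2 * PhiT T t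

/-- `𝓙(T, h; R_L)`. -/
def calJ (r : ℕ → ℂ) (T h L : ℝ) : ℂ :=
  ∫ t : ℝ,
    (logZeta (1 / 2 + (t + h / 2) * Complex.I) -
        logZeta (1 / 2 + (t - h / 2) * Complex.I)) ^ 2 *
      ((norm (RL r L (1 / 2 + t * Complex.I)) ^ 2 : ℝ) : ℂ) * ((PhiT T t : ℝ) : ℂ)

/-- `𝓘₁(T; R_L, A)`. -/
def calI1 (a r : ℕ → ℂ) (T L : ℝ) : ℝ :=
  ∫ t : ℝ,
    norm (∑ n ∈ Icc 1 ⌊L⌋₊,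
        AX a (L / n) (1 / 2 + t * Complex.I) * r n *
          (n : ℂ) ^ (-(1 / 2 : ℂ) - t * Complex.I)) ^ 2 * PhiT T t

/-- `𝓘₂(T, h; R_L, A)`. -/
def calI2 (a r : ℕ → ℂ) (T h L : ℝ) : ℂ :=
  ∑ p ∈ Icc 1 ⌊L⌋₊ ×ˢ Icc 1 ⌊L⌋₊,
    r p.1 * conj (r p.2) / ((Real.sqrt ((p.1 * p.2 : ℕ) : ℝ) : ℝ) : ℂ) *
      ∫ t : ℝ,
        (logZeta (1 / 2 + (t + h / 2) * Complex.I) -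
            logZeta (1 / 2 + (t - h / 2) * Complex.I)) *
          conj (AX a (L / p.2) (1 / 2 + t * Complex.I)) *
          ((p.1 : ℂ) / (p.2 : ℂ)) ^ (-(t : ℂ) * Complex.I) * ((PhiT T t : ℝ) : ℂ)


/-- `I_f(ℓ) = ∫₀¹ f(u)² u^{ℓ²-1} du`. -/
def If (f : ℝ → ℝ) (ℓ : ℝ) : ℝ := ∫ u in (0:ℝ)..1, f u ^ 2 * u ^ (ℓ ^ 2 - 1)

/-- The quantity `𝓜_{ℓ,f}(φ)` of Theorem 2. -/
def Mlf (ℓ : ℝ) (f : ℝ → ℝ) (φ : ℝ) : ℝ :=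
  |1 - 2 * φ| * (2 / Real.pi) * ℓ *
      ∫ u in (0:ℝ)..1, (Real.sin (Real.pi * φ * u) / u) *
        ∫ v in (0:ℝ)..(1 - u), f v * f (u + v) * v ^ (ℓ ^ 2 - 1)
    + (2 / Real.pi ^ 2) * ℓ ^ 2 *
      ∫ u₁ in (0:ℝ)..1, (Real.sin (Real.pi * φ * u₁) / u₁) *
        ∫ u₂ in (0:ℝ)..(1 - u₁), (Real.sin (Real.pi * φ * u₂) / u₂) *
          ∫ v in (0:ℝ)..(1 - (u₁ + u₂)),
            (f v * f (u₁ + u₂ + v) + f (u₁ + v) * f (u₂ + v)) * v ^ (ℓ ^ 2 - 1)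
    + (2 / Real.pi ^ 2) *
      ∫ u in (0:ℝ)..1, (Real.sin (Real.pi * φ * u) ^ 2 / u) *
        ∫ v in (0:ℝ)..(1 - u), f v ^ 2 * v ^ (ℓ ^ 2 - 1)

/-- The generalized divisor function `d_ℓ`, the multiplicative function with
`d_ℓ(p^a) = Γ(a + ℓ)/(Γ(ℓ) Γ(a + 1))`. -/
def dGen (ℓ : ℝ) (n : ℕ) : ℝ :=
  ∏ p ∈ n.primeFactors,
    Real.Gamma ((n.factorization p : ℝ) + ℓ) /
      (Real.Gamma ℓ * Real.Gamma ((n.factorization p : ℝ) + 1))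

/-- The Liouville function `λ(n) = (-1)^{Ω(n)}`. -/
def liouville (n : ℕ) : ℝ := (-1 : ℝ) ^ (ArithmeticFunction.cardFactors n)

/-- The Fourier transform `V̂(z) = ∫ V(x) e^{-2πixz} dx` (of the restriction to ℝ). -/
def Fhat (V : ℂ → ℂ) (z : ℂ) : ℂ :=
  ∫ x : ℝ, V x * Complex.exp (-2 * Real.pi * Complex.I * x * z)

/-- The integral over the contour `C(α)`, which starts from the origin, proceeds along the
real axis to `α`, encircles `α` once counterclockwise, and returns to the origin along the
same path.  For a function `g` with a fixed branch off the real axis this equals the integral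
of the difference of the two one-sided (lower minus upper) limit values along `[0, α]`,
the circle around `α` contributing nothing in the limit of vanishing radius. -/
def contourIntegralC (α : ℝ) (g : ℂ → ℂ) : ℂ :=
  ∫ x in (0:ℝ)..α,
    (limUnder (nhdsWithin (0:ℝ) (Set.Iio 0)) (fun ε : ℝ => g (x + ε * Complex.I)) -
      limUnder (nhdsWithin (0:ℝ) (Set.Ioi 0)) (fun ε : ℝ => g (x + ε * Complex.I)))

/-- `𝓝(T, h, L; a, r)`; the real parameter `c` is the `O(h)` quantity appearing in its
first term. -/
def calN (a r : ℕ → ℂ) (T h L c : ℝ) : ℝ :=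
  -(1 - h / Real.pi * Real.log T + c) * (1 / Real.pi) * (sumKM h r L).im +
    (1 / (2 * Real.pi ^ 2)) * (sumDiag h a r L).re -
    (1 / (2 * Real.pi ^ 2)) * (sumTriple h r L).re

/-- `∑_{km, ln ≤ L, km = ln} (a(k) conj(a(l))/√(kl)) (r(m) conj(r(n))/√(mn))`. -/
def sumDiagAA (a r : ℕ → ℂ) (L : ℝ) : ℂ :=
  ∑ q ∈ ((Icc 1 ⌊L⌋₊ ×ˢ Icc 1 ⌊L⌋₊) ×ˢ (Icc 1 ⌊L⌋₊ ×ˢ Icc 1 ⌊L⌋₊)).filter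
      (fun q => q.1.1 * q.1.2 ≤ ⌊L⌋₊ ∧ q.2.1 * q.2.2 ≤ ⌊L⌋₊ ∧ q.1.1 * q.1.2 = q.2.1 * q.2.2),
    a q.1.1 * conj (a q.2.1) / ((Real.sqrt ((q.1.1 * q.2.1 : ℕ) : ℝ) : ℝ) : ℂ) *
      (r q.1.2 * conj (r q.2.2) / ((Real.sqrt ((q.1.2 * q.2.2 : ℕ) : ℝ) : ℝ) : ℂ))

/-- `∑_{km, ln ≤ L, km = ln} (g_h(k) conj(a(l))/√(kl)) (r(m) conj(r(n))/√(mn))`. -/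
def sumDiagGA (h : ℝ) (a r : ℕ → ℂ) (L : ℝ) : ℂ :=
  ∑ q ∈ ((Icc 1 ⌊L⌋₊ ×ˢ Icc 1 ⌊L⌋₊) ×ˢ (Icc 1 ⌊L⌋₊ ×ˢ Icc 1 ⌊L⌋₊)).filter
      (fun q => q.1.1 * q.1.2 ≤ ⌊L⌋₊ ∧ q.2.1 * q.2.2 ≤ ⌊L⌋₊ ∧ q.1.1 * q.1.2 = q.2.1 * q.2.2),
    gh h q.1.1 * conj (a q.2.1) / ((Real.sqrt ((q.1.1 * q.2.1 : ℕ) : ℝ) : ℝ) : ℂ) *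
      (r q.1.2 * conj (r q.2.2) / ((Real.sqrt ((q.1.2 * q.2.2 : ℕ) : ℝ) : ℝ) : ℂ))

/-- The quantity `𝓩(v; V)` of Lemma `lem_STF_Sv`, a sum over the zeros `ρ = β + iγ` of
`ζ` with `β > 1/2`. -/
def calZ (v : ℝ) (V : ℂ → ℂ) : ℂ :=
  (∑' ρ : {ρ : ℂ // riemannZeta ρ = 0 ∧ 1 / 2 < ρ.re},
    contourIntegralC (ρ.1.re - 1 / 2) fun w =>
      (logZeta (1 / 2 + (ρ.1.im : ℂ) * Complex.I + w) -
          logZeta (1 / 2 + ((ρ.1.im - v : ℝ) : ℂ) * Complex.I + w)) ^ 2 *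
        V (((ρ.1.im - v / 2 : ℝ) : ℂ) - Complex.I * w)) +
  ∑' ρ : {ρ : ℂ // riemannZeta ρ = 0 ∧ 1 / 2 < ρ.re},
    contourIntegralC (ρ.1.re - 1 / 2) fun w =>
      (logZeta (1 / 2 + ((ρ.1.im + v : ℝ) : ℂ) * Complex.I + w) -
          logZeta (1 / 2 + (ρ.1.im : ℂ) * Complex.I + w)) ^ 2 *
        V (((ρ.1.im + v / 2 : ℝ) : ℂ) - Complex.I * w)

/-- The quantity `𝓟(v; V)` of Lemma `lem_STF_Sv`. -/
def calP (v : ℝ) (V : ℂ → ℂ) : ℂ :=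
  contourIntegralC (1 / 2) (fun w =>
    (logZeta (1 / 2 + w) - logZeta (1 / 2 - (v : ℂ) * Complex.I + w)) ^ 2 *
      V ((-(v / 2) : ℝ) - Complex.I * w)) +
  contourIntegralC (1 / 2) (fun w =>
    (logZeta (1 / 2 + (v : ℂ) * Complex.I + w) - logZeta (1 / 2 + w)) ^ 2 *
      V (((v / 2) : ℝ) - Complex.I * w))



/-- decomposition of `n^{-s}` -/
lemma cpow_decomp (n : ℕ) (hn : 1 ≤ n) (t : ℝ) :
    (n : ℂ) ^ (-(1/2 + (t:ℂ) * Complex.I)) =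
      (((n:ℝ) ^ (-(1/2:ℝ)) : ℝ) : ℂ) * Complex.exp (-(t * Real.log n) * Complex.I) := by
  have hn0 : (0:ℝ) < n := by exact_mod_cast hn
  have hne : (n : ℂ) ≠ 0 := by exact_mod_cast hn0.ne'
  rw [Complex.cpow_def_of_ne_zero hne]
  rw [show ((n:ℂ)) = ((n:ℝ):ℂ) by push_cast; ring, ← Complex.ofReal_log hn0.le]
  rw [Real.rpow_def_of_pos hn0, Complex.ofReal_exp, ← Complex.exp_add]
  congr 1
  push_cast
  ring

def Eg (σ μ ξ : ℝ) (t : ℝ) : ℂ :=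
  Complex.exp (((-(1/(2*σ^2)) : ℝ) : ℂ) * t^2 + (((μ/σ^2 : ℝ) : ℂ) - (ξ:ℂ) * Complex.I) * t
    + ((-(μ^2/(2*σ^2)) : ℝ) : ℂ))

lemma Eg_integrable (σ μ ξ : ℝ) (hσ : 0 < σ) : Integrable (Eg σ μ ξ) := by
  apply integrable_cexp_quadratic' (b := ((-(1/(2*σ^2)) : ℝ) : ℂ))
  simp only [Complex.ofReal_re]
  have : (0:ℝ) < 1/(2*σ^2) := by positivity
  linarith

lemma Eg_eq (σ μ ξ t : ℝ) (hσ : σ ≠ 0) :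
    Complex.exp (-(t*ξ) * Complex.I) * ((Real.exp (-((t-μ)/σ)^2/2) : ℝ) : ℂ) = Eg σ μ ξ t := by
  rw [Eg, Complex.ofReal_exp, ← Complex.exp_add]
  congr 1
  rw [show (-((t-μ)/σ)^2/2 : ℝ) = -(1/(2*σ^2))*t^2 + (μ/σ^2)*t + -(μ^2/(2*σ^2)) by
    field_simp; ring]
  push_cast
  ring

lemma Eg_integral (σ μ ξ : ℝ) (hσ : 0 < σ) :
    ∫ t : ℝ, Eg σ μ ξ t =
      ((Real.sqrt (2*Real.pi) * σ : ℝ) : ℂ) *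
        Complex.exp (((-(σ^2*ξ^2/2) : ℝ) : ℂ) - ((μ*ξ : ℝ) : ℂ) * Complex.I) := by
  have hb : ((-(1/(2*σ^2)) : ℝ) : ℂ).re < 0 := by
    simp only [Complex.ofReal_re]
    have : (0:ℝ) < 1/(2*σ^2) := by positivity
    linarith
  rw [show (∫ t : ℝ, Eg σ μ ξ t) = ∫ t : ℝ, Complex.exp (((-(1/(2*σ^2)) : ℝ) : ℂ) * t^2
      + (((μ/σ^2 : ℝ) : ℂ) - (ξ:ℂ) * Complex.I) * t + ((-(μ^2/(2*σ^2)) : ℝ) : ℂ)) from rfl]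
  rw [integral_cexp_quadratic hb]
  have hσ' : (σ : ℂ) ≠ 0 := by exact_mod_cast hσ.ne'
  congr 1
  · have h1 : (↑Real.pi / -((-(1/(2*σ^2)) : ℝ) : ℂ)) = ((2*Real.pi*σ^2 : ℝ) : ℂ) := by
      push_cast
      field_simp
    rw [h1, show ((1:ℂ)/2) = (((1/2 : ℝ) : ℂ)) by norm_num,
      ← Complex.ofReal_cpow (by positivity) (1/2 : ℝ)]
    norm_cast
    rw [← Real.sqrt_eq_rpow, Real.sqrt_mul (by positivity) (σ^2), Real.sqrt_sq hσ.le]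
  · congr 1
    have hI := Complex.I_sq
    field_simp
    ring_nf
    rw [Complex.I_sq]
    push_cast
    have hss : (σ:ℂ)^2 * (σ:ℂ)⁻¹^2 = 1 := by rw [← mul_pow, mul_inv_cancel₀ hσ', one_pow]
    linear_combination (-(ξ:ℂ)^2) * hss

lemma Eg_abs_integral (σ μ ξ : ℝ) (hσ : 0 < σ) :
    ‖∫ t : ℝ, Eg σ μ ξ t‖ =
      Real.sqrt (2*Real.pi) * σ * Real.exp (-(σ^2*ξ^2/2)) := by
  rw [Eg_integral σ μ ξ hσ, norm_mul, Complex.norm_real, Real.norm_eq_abs, Complex.norm_exp]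
  have : (((-(σ^2*ξ^2/2) : ℝ) : ℂ) - ((μ*ξ : ℝ) : ℂ) * Complex.I).re = -(σ^2*ξ^2/2) := by
    simp [← Complex.ofReal_pow]
  rw [this, abs_of_nonneg (by positivity)]

lemma natmul_cpow (k n : ℕ) (s : ℂ) : ((k * n : ℕ) : ℂ) ^ s = (k:ℂ)^s * (n:ℂ)^s := by
  rw [show ((k*n : ℕ):ℂ) = ((k:ℝ):ℂ) * ((n:ℝ):ℂ) by push_cast; ring,
    Complex.mul_cpow_ofReal_nonneg (Nat.cast_nonneg k) (Nat.cast_nonneg n)]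
  norm_num

lemma floor_div_iff (L : ℝ) (hL : 1 ≤ L) (n k : ℕ) (hn : 1 ≤ n) :
    k ≤ ⌊L / (n:ℝ)⌋₊ ↔ k * n ≤ ⌊L⌋₊ := by
  have hn0 : (0:ℝ) < n := by exact_mod_cast hn
  rw [Nat.le_floor_iff (by positivity), Nat.le_floor_iff (by linarith : (0:ℝ) ≤ L),
    le_div_iff₀ hn0]
  push_cast
  rfl

lemma sqrtstuff (k m l n : ℕ) :
    ((k*m:ℕ):ℝ)^(-(1/2:ℝ)) * ((l*n:ℕ):ℝ)^(-(1/2:ℝ)) =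
      (Real.sqrt ((k*l:ℕ):ℝ))⁻¹ * (Real.sqrt ((m*n:ℕ):ℝ))⁻¹ := by
  rw [Real.sqrt_eq_rpow, Real.sqrt_eq_rpow,
    ← Real.rpow_neg (Nat.cast_nonneg _), ← Real.rpow_neg (Nat.cast_nonneg _),
    ← Real.mul_rpow (Nat.cast_nonneg _) (Nat.cast_nonneg _),
    ← Real.mul_rpow (Nat.cast_nonneg _) (Nat.cast_nonneg _)]
  congr 1
  push_cast
  ring

lemma log_gap (mm nn N : ℕ) (h1 : 1 ≤ mm) (h2 : 1 ≤ nn) (hm : mm ≤ N) (hn : nn ≤ N)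
    (hne : mm ≠ nn) : 1/(2*(N:ℝ)) ≤ |Real.log mm - Real.log nn| := by
  have key : ∀ a b : ℕ, 1 ≤ a → a ≤ N → a < b → 1/(2*(N:ℝ)) ≤ Real.log b - Real.log a := by
    intro a b ha haN hab
    have ha0 : (0:ℝ) < a := by exact_mod_cast ha
    have hstep : Real.log (a+1 : ℝ) - Real.log a ≥ 1/((a:ℝ)+1) := by
      have h3 : Real.log ((a:ℝ)/((a:ℝ)+1)) ≤ (a:ℝ)/((a:ℝ)+1) - 1 :=
        Real.log_le_sub_one_of_pos (by positivity)
      rw [Real.log_div ha0.ne' (by positivity)] at h3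
      have h4 : (a:ℝ)/((a:ℝ)+1) - 1 = -(1/((a:ℝ)+1)) := by field_simp; ring
      rw [h4] at h3
      linarith
    have hmono : Real.log (a+1 : ℝ) ≤ Real.log b := by
      apply Real.log_le_log (by positivity)
      exact_mod_cast hab
    have hN0 : (0:ℝ) < N := by exact_mod_cast (le_trans ha haN)
    have ha1 : (1:ℝ) ≤ a := by exact_mod_cast ha
    have hN1 : (1:ℝ) ≤ N := by exact_mod_cast le_trans ha haN
    have h5 : 1/(2*(N:ℝ)) ≤ 1/((a:ℝ)+1) := by
      apply one_div_le_one_div_of_le (by positivity)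
      have : (a:ℝ) ≤ N := by exact_mod_cast haN
      linarith
    linarith
  have hNnn : (0:ℝ) ≤ 1/(2*(N:ℝ)) := by positivity
  rcases lt_or_gt_of_ne hne with hlt | hgt
  · rw [abs_sub_comm, abs_of_nonneg (by
      have := key mm nn h1 hm hlt; linarith)]
    exact key mm nn h1 hm hlt
  · rw [abs_of_nonneg (by have := key nn mm h2 hn hgt; linarith)]
    exact key nn mm h2 hn hgt


lemma abssq_cast (z : ℂ) (y : ℝ) :
    ((‖z‖ ^ 2 * y : ℝ) : ℂ) = z * (starRingEnd ℂ) z * (y:ℂ) := by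
  rw [Complex.ofReal_mul, Complex.sq_norm, Complex.mul_conj]

lemma exp_combine (t u v : ℝ) :
    Complex.exp (-((t:ℂ) * (u:ℂ)) * Complex.I) * Complex.exp (((t:ℂ) * (v:ℂ)) * Complex.I) =
      Complex.exp (-((t:ℂ) * (((u - v : ℝ)) : ℂ)) * Complex.I) := by
  rw [← Complex.exp_add]
  congr 1
  push_cast
  ring

lemma pair_key (σ μ : ℝ) (hσ : σ ≠ 0) (t : ℝ) (x y : ℕ) (hx : 1 ≤ x) (hy : 1 ≤ y) :
    ((x:ℂ)^(-(1/2 + (t:ℂ)*Complex.I))) * (starRingEnd ℂ) ((y:ℂ)^(-(1/2 + (t:ℂ)*Complex.I))) *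
      ((Real.exp (-((t-μ)/σ)^2/2) : ℝ) : ℂ)
    = (((((x:ℝ)^(-(1/2:ℝ)) * (y:ℝ)^(-(1/2:ℝ))) : ℝ)) : ℂ) *
        Eg σ μ (Real.log x - Real.log y) t := by
  rw [cpow_decomp x hx t, cpow_decomp y hy t, ← Eg_eq σ μ _ t hσ]
  rw [map_mul, Complex.conj_ofReal, ← Complex.exp_conj]
  have hc : (starRingEnd ℂ) (-((t:ℂ) * ((Real.log y : ℝ):ℂ)) * Complex.I) =
      ((t:ℂ) * ((Real.log y : ℝ):ℂ)) * Complex.I := by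
    simp only [map_mul, map_neg, Complex.conj_ofReal, Complex.conj_I]
    ring
  rw [hc, Complex.ofReal_mul, ← exp_combine t (Real.log x) (Real.log y)]
  ring

lemma Dconj_expand (P : Finset (ℕ×ℕ)) (hP : ∀ p ∈ P, 1 ≤ p.1 * p.2) (c : ℕ×ℕ → ℂ)
    (σ μ : ℝ) (hσ : σ ≠ 0) (t : ℝ) :
    (∑ p ∈ P, c p * ((p.1*p.2 : ℕ):ℂ)^(-(1/2 + (t:ℂ)*Complex.I))) *
      (starRingEnd ℂ) (∑ q ∈ P, c q * ((q.1*q.2 : ℕ):ℂ)^(-(1/2 + (t:ℂ)*Complex.I))) *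
      ((Real.exp (-((t-μ)/σ)^2/2) : ℝ) : ℂ)
    = ∑ pq ∈ P ×ˢ P,
        (c pq.1 * (starRingEnd ℂ) (c pq.2) *
          (((((pq.1.1*pq.1.2:ℕ):ℝ)^(-(1/2:ℝ)) * (((pq.2.1*pq.2.2:ℕ):ℝ)^(-(1/2:ℝ))) : ℝ)) : ℂ)) *
          Eg σ μ (Real.log ((pq.1.1*pq.1.2:ℕ):ℝ) - Real.log ((pq.2.1*pq.2.2:ℕ):ℝ)) t := by
  rw [map_sum, Finset.sum_mul_sum, Finset.sum_mul, Finset.sum_product]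
  refine Finset.sum_congr rfl fun p hp => ?_
  rw [Finset.sum_mul]
  refine Finset.sum_congr rfl fun q hq => ?_
  rw [map_mul]
  have key := pair_key σ μ hσ t (p.1*p.2) (q.1*q.2) (hP p hp) (hP q hq)
  calc c p * ((p.1*p.2:ℕ):ℂ) ^ (-(1/2 + (t:ℂ)*Complex.I)) *
        ((starRingEnd ℂ) (c q) *
          (starRingEnd ℂ) (((q.1*q.2:ℕ):ℂ) ^ (-(1/2 + (t:ℂ)*Complex.I)))) *
        ((Real.exp (-((t-μ)/σ)^2/2) : ℝ) : ℂ)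
      = c p * (starRingEnd ℂ) (c q) *
        ((((p.1*p.2:ℕ):ℂ) ^ (-(1/2 + (t:ℂ)*Complex.I))) *
          (starRingEnd ℂ) (((q.1*q.2:ℕ):ℂ) ^ (-(1/2 + (t:ℂ)*Complex.I))) *
          ((Real.exp (-((t-μ)/σ)^2/2) : ℝ) : ℂ)) := by ring
    _ = _ := by rw [key]; ring

lemma sumA (a r : ℕ → ℂ) (L : ℝ) (hL : 1 ≤ L) (t : ℝ) :
    (∑ n ∈ Icc 1 ⌊L⌋₊, AX a (L / n) (1/2 + (t:ℝ) * Complex.I) * r n *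
        (n:ℂ) ^ (-(1/2:ℂ) - (t:ℝ) * Complex.I))
    = ∑ p ∈ ((Icc 1 ⌊L⌋₊ ×ˢ Icc 1 ⌊L⌋₊).filter fun p : ℕ×ℕ => p.1 * p.2 ≤ ⌊L⌋₊),
        (a p.1 * r p.2) * ((p.1 * p.2 : ℕ) : ℂ) ^ (-(1/2 + (t:ℂ)*Complex.I)) := by
  rw [Finset.sum_filter, Finset.sum_product, Finset.sum_comm]
  refine Finset.sum_congr rfl fun n hn => ?_
  have hn1 : 1 ≤ n := (Finset.mem_Icc.1 hn).1
  have hset : Icc 1 ⌊L / (n:ℝ)⌋₊ = (Icc 1 ⌊L⌋₊).filter (fun k => k * n ≤ ⌊L⌋₊) := by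
    ext k
    simp only [Finset.mem_Icc, Finset.mem_filter]
    constructor
    · rintro ⟨hk1, hk2⟩
      have h2 := (floor_div_iff L hL n k hn1).1 hk2
      exact ⟨⟨hk1, le_trans (Nat.le_mul_of_pos_right k (by omega)) h2⟩, h2⟩
    · rintro ⟨⟨hk1, _⟩, hkn⟩
      exact ⟨hk1, (floor_div_iff L hL n k hn1).2 hkn⟩
  rw [AX, hset, ← Finset.sum_filter, Finset.sum_mul, Finset.sum_mul]
  refine Finset.sum_congr rfl fun k hk => ?_
  rw [natmul_cpow k n (-(1/2 + (t:ℂ)*Complex.I))]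
  rw [show (-(1/2:ℂ) - (t:ℝ) * Complex.I) = -(1/2 + (t:ℂ)*Complex.I) by ring]
  ring

lemma PhiHat0_eq (T : ℝ) (hσ : T / Real.log T ≠ 0) :
    ((PhiHat0 T : ℝ) : ℂ) = ∫ t : ℝ, Eg (T / Real.log T) (3*T/2) 0 t := by
  rw [PhiHat0, ← integral_complex_ofReal]
  refine congrArg _ (funext fun t => ?_)
  rw [← Eg_eq (T / Real.log T) (3*T/2) 0 t hσ]
  simp only [Complex.ofReal_zero, mul_zero, neg_zero, zero_mul, Complex.exp_zero, one_mul]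
  rfl

lemma CS_bound (g : ℕ → ℂ) (N : ℕ) :
    (∑ k ∈ Icc 1 N, norm (g k) * (k:ℝ)^(-(1/2:ℝ)))^2
      ≤ N * ∑ k ∈ Icc 1 N, norm (g k)^2 / k := by
  have h := Finset.sum_mul_sq_le_sq_mul_sq (Icc 1 N) (fun _ => (1:ℝ))
      (fun k => norm (g k) * (k:ℝ)^(-(1/2:ℝ)))
  simp only [one_pow, one_mul] at h
  have hcard : ∑ _k ∈ Icc 1 N, (1:ℝ) = N := by
    simp [Nat.card_Icc]
  have hsq : ∀ k ∈ Icc 1 N, (norm (g k) * (k:ℝ)^(-(1/2:ℝ)))^2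
      = norm (g k)^2 / k := by
    intro k hk
    have hk0 : (0:ℝ) < k := by exact_mod_cast (Finset.mem_Icc.1 hk).1
    rw [mul_pow, ← Real.rpow_natCast ((k:ℝ)^(-(1/2:ℝ))) 2, ← Real.rpow_mul hk0.le]
    norm_num
    rw [Real.rpow_neg_one, div_eq_mul_inv]
  rw [Finset.sum_congr rfl hsq, hcard] at h
  exact h

set_option maxHeartbeats 2000000 in
/-- **Lemma (asymptotic formula for `𝓘₁`).** -/
theorem calI1_asymptotic :
    ∃ C > 0, ∃ L₀ T₀ : ℝ, ∀ (a r : ℕ → ℂ) (L T h : ℝ),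
      L₀ ≤ L → T₀ ≤ T → L ≤ T / Real.log T ^ 2 → 0 < h → h ≤ 1 →
      norm ((calI1 a r T L : ℝ) - (PhiHat0 T : ℂ) * sumDiagAA a r L) ≤
        C * ((1 / T) * S1 a L * S1 r L) := by
  refine ⟨3, by norm_num, 2, Real.exp 100, ?_⟩
  intro a r L T h hLL hTT hLT hh0 hh1
  have h100 : (101:ℝ) ≤ Real.exp 100 := by
    have := Real.add_one_le_exp (100:ℝ); linarith
  have hT1 : (1:ℝ) < T := by linarith
  have hT0 : (0:ℝ) < T := by linarith
  have hlog : (100:ℝ) ≤ Real.log T := by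
    calc (100:ℝ) = Real.log (Real.exp 100) := (Real.log_exp 100).symm
    _ ≤ Real.log T := Real.log_le_log (Real.exp_pos 100) hTT
  have hlogpos : (0:ℝ) < Real.log T := by linarith
  set σ := T / Real.log T with hσdef
  have hσ : 0 < σ := div_pos hT0 hlogpos
  set μ := 3*T/2 with hμdef
  have hL1 : (1:ℝ) ≤ L := by linarith
  set N := ⌊L⌋₊ with hNdef
  have hN1 : 1 ≤ N := Nat.le_floor (by exact_mod_cast hL1)
  have hNL : (N:ℝ) ≤ L := Nat.floor_le (by linarith)
  have hN0 : (0:ℝ) < N := by exact_mod_cast hN1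
  set P := (Icc 1 N ×ˢ Icc 1 N).filter (fun p : ℕ×ℕ => p.1 * p.2 ≤ N) with hPdef
  set c : ℕ×ℕ → ℂ := fun p => a p.1 * r p.2 with hcdef
  have hPmem : ∀ p ∈ P, 1 ≤ p.1 ∧ 1 ≤ p.2 ∧ p.1 * p.2 ≤ N := by
    intro p hp
    simp only [hPdef, Finset.mem_filter, Finset.mem_product, Finset.mem_Icc] at hp
    exact ⟨hp.1.1.1, hp.1.2.1, hp.2⟩
  have hPone : ∀ p ∈ P, 1 ≤ p.1 * p.2 := by
    intro p hp
    obtain ⟨h1, h2, _⟩ := hPmem p hp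
    exact Nat.one_le_iff_ne_zero.2 (Nat.mul_ne_zero (by omega) (by omega))
  set w : ℕ×ℕ → ℕ×ℕ → ℂ := fun p q => c p * (starRingEnd ℂ) (c q) *
      ((( ((p.1*p.2:ℕ):ℝ)^(-(1/2:ℝ)) * ((q.1*q.2:ℕ):ℝ)^(-(1/2:ℝ)) : ℝ)):ℂ) with hwdef
  set xi : ℕ×ℕ → ℕ×ℕ → ℝ :=
    fun p q => Real.log ((p.1*p.2:ℕ):ℝ) - Real.log ((q.1*q.2:ℕ):ℝ) with hxidef
  -- Step 1: complex form of calI1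
  have hI1 : ((calI1 a r T L : ℝ) : ℂ) =
      ∑ pq ∈ P ×ˢ P, w pq.1 pq.2 * ∫ t:ℝ, Eg σ μ (xi pq.1 pq.2) t := by
    rw [calI1, ← integral_complex_ofReal]
    have hpt : ∀ t : ℝ,
        ((norm (∑ n ∈ Icc 1 ⌊L⌋₊, AX a (L/n) (1/2 + (t:ℝ)*Complex.I) * r n *
            (n:ℂ)^(-(1/2:ℂ) - (t:ℝ)*Complex.I)) ^2 * PhiT T t : ℝ) : ℂ)
        = ∑ pq ∈ P ×ˢ P, w pq.1 pq.2 * Eg σ μ (xi pq.1 pq.2) t := by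
      intro t
      rw [abssq_cast, sumA a r L hL1 t]
      have hPhi : PhiT T t = Real.exp (-((t-μ)/σ)^2/2) := rfl
      rw [hPhi]
      exact Dconj_expand P hPone c σ μ hσ.ne' t
    rw [show (fun t : ℝ => ((norm (∑ n ∈ Icc 1 ⌊L⌋₊,
          AX a (L/n) (1/2 + (t:ℝ)*Complex.I) * r n *
          (n:ℂ)^(-(1/2:ℂ) - (t:ℝ)*Complex.I)) ^2 * PhiT T t : ℝ) : ℂ))
        = fun t : ℝ => ∑ pq ∈ P ×ˢ P, w pq.1 pq.2 * Eg σ μ (xi pq.1 pq.2) t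
      from funext hpt]
    rw [integral_finset_sum _ (fun pq _ => ((Eg_integrable σ μ _ hσ).const_mul _))]
    exact Finset.sum_congr rfl fun pq _ => integral_const_mul _ _
  clear_value σ μ N P c w xi
  -- diagonal part
  have hdiag : ∑ pq ∈ (P ×ˢ P).filter
        (fun pq : (ℕ×ℕ)×(ℕ×ℕ) => pq.1.1*pq.1.2 = pq.2.1*pq.2.2),
      w pq.1 pq.2 * ∫ t:ℝ, Eg σ μ (xi pq.1 pq.2) t = (PhiHat0 T : ℂ) * sumDiagAA a r L := by
    have hPH : ∀ pq ∈ (P ×ˢ P).filter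
        (fun pq : (ℕ×ℕ)×(ℕ×ℕ) => pq.1.1*pq.1.2 = pq.2.1*pq.2.2),
        w pq.1 pq.2 * ∫ t:ℝ, Eg σ μ (xi pq.1 pq.2) t
          = w pq.1 pq.2 * ((PhiHat0 T : ℝ):ℂ) := by
      intro pq hpq
      have heq : pq.1.1*pq.1.2 = pq.2.1*pq.2.2 := (Finset.mem_filter.1 hpq).2
      have hxi0 : xi pq.1 pq.2 = 0 := by simp only [hxidef]; rw [heq, sub_self]
      rw [hxi0]
      congr 1
      rw [hσdef, hμdef]
      exact (PhiHat0_eq T (by rw [← hσdef]; exact hσ.ne')).symm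
    rw [Finset.sum_congr rfl hPH, ← Finset.sum_mul, mul_comm]
    congr 1
    rw [sumDiagAA, ← hNdef]
    refine Finset.sum_congr ?_ ?_
    · ext q
      simp only [Finset.mem_filter, Finset.mem_product, hPdef]
      tauto
    · intro q hq
      simp only [hwdef, hcdef]
      rw [sqrtstuff q.1.1 q.1.2 q.2.1 q.2.2]
      simp only [map_mul]
      push_cast
      ring
  -- difference is the off-diagonal sum
  have hoff : ((calI1 a r T L : ℝ) : ℂ) - (PhiHat0 T : ℂ) * sumDiagAA a r L
      = ∑ pq ∈ (P ×ˢ P).filter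
          (fun pq : (ℕ×ℕ)×(ℕ×ℕ) => ¬ (pq.1.1*pq.1.2 = pq.2.1*pq.2.2)),
          w pq.1 pq.2 * ∫ t:ℝ, Eg σ μ (xi pq.1 pq.2) t := by
    rw [hI1, ← Finset.sum_filter_add_sum_filter_not (P ×ˢ P)
      (fun pq : (ℕ×ℕ)×(ℕ×ℕ) => pq.1.1*pq.1.2 = pq.2.1*pq.2.2), hdiag]
    ring
  rw [hoff]
  set B := Real.sqrt (2*Real.pi) * σ * Real.exp (-(Real.log T^2/8)) with hBdef
  have hB0 : 0 ≤ B :=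
    mul_nonneg (mul_nonneg (Real.sqrt_nonneg _) hσ.le) (Real.exp_pos _).le
  have hterm : ∀ pq ∈ (P ×ˢ P).filter
      (fun pq : (ℕ×ℕ)×(ℕ×ℕ) => ¬ (pq.1.1*pq.1.2 = pq.2.1*pq.2.2)),
      norm (w pq.1 pq.2 * ∫ t:ℝ, Eg σ μ (xi pq.1 pq.2) t)
        ≤ norm (w pq.1 pq.2) * B := by
    intro pq hpq
    rw [norm_mul]
    refine mul_le_mul_of_nonneg_left ?_ (norm_nonneg _)
    rw [Eg_abs_integral σ μ _ hσ, hBdef]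
    refine mul_le_mul_of_nonneg_left ?_ (mul_nonneg (Real.sqrt_nonneg _) hσ.le)
    rw [Real.exp_le_exp]
    obtain ⟨hmemP, hne⟩ := Finset.mem_filter.1 hpq
    obtain ⟨hp1, hp2⟩ := Finset.mem_product.1 hmemP
    obtain ⟨h11, h12, h13⟩ := hPmem _ hp1
    obtain ⟨h21, h22, h23⟩ := hPmem _ hp2
    have hone1 : 1 ≤ pq.1.1*pq.1.2 := hPone _ hp1
    have hone2 : 1 ≤ pq.2.1*pq.2.2 := hPone _ hp2
    have hgap := log_gap (pq.1.1*pq.1.2) (pq.2.1*pq.2.2) N hone1 hone2 h13 h23 hne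
    have hNT : (N:ℝ) * Real.log T^2 ≤ T := by
      have h1 : L * Real.log T^2 ≤ T := (le_div_iff₀ (by positivity)).1 hLT
      have h2 := mul_le_mul_of_nonneg_right hNL (sq_nonneg (Real.log T))
      linarith
    have hσval : σ * Real.log T = T := by rw [hσdef]; field_simp
    have hkey : (N:ℝ) * Real.log T ≤ σ := by
      rw [← mul_le_mul_iff_of_pos_right hlogpos]
      linarith [hNT, hσval]
    have hσ2N : Real.log T / 2 ≤ σ * (1/(2*(N:ℝ))) := by
      rw [mul_one_div, le_div_iff₀ (by positivity)]
      linarith [hkey]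
    have habs : Real.log T / 2 ≤ σ * |xi pq.1 pq.2| := by
      calc Real.log T/2 ≤ σ * (1/(2*(N:ℝ))) := hσ2N
      _ ≤ σ * |xi pq.1 pq.2| := by
          refine mul_le_mul_of_nonneg_left ?_ hσ.le
          simpa only [hxidef] using hgap
    have h4 : (Real.log T/2)^2 ≤ (σ * |xi pq.1 pq.2|)^2 :=
      pow_le_pow_left₀ (by linarith) habs 2
    have h5 : (σ * |xi pq.1 pq.2|)^2 = σ^2 * (xi pq.1 pq.2)^2 := by
      rw [mul_pow, sq_abs]
    linarith [h4, h5, sq_nonneg (Real.log T)]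
  set f : ℕ×ℕ → ℝ := fun p => norm (c p) * ((p.1*p.2:ℕ):ℝ)^(-(1/2:ℝ)) with hfdef
  have hf0 : ∀ p : ℕ×ℕ, 0 ≤ f p := fun p =>
    mul_nonneg (norm_nonneg _) (Real.rpow_nonneg (Nat.cast_nonneg _) _)
  have hwabs : ∀ p q : ℕ×ℕ, norm (w p q) = f p * f q := by
    intro p q
    simp only [hwdef, hfdef, norm_mul, Complex.norm_real, Real.norm_eq_abs, Complex.norm_conj, abs_mul]
    rw [abs_of_nonneg (Real.rpow_nonneg (Nat.cast_nonneg _) _),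
      abs_of_nonneg (Real.rpow_nonneg (Nat.cast_nonneg _) _)]
    ring
  have hchain1 : norm (∑ pq ∈ (P ×ˢ P).filter
      (fun pq : (ℕ×ℕ)×(ℕ×ℕ) => ¬ (pq.1.1*pq.1.2 = pq.2.1*pq.2.2)),
      w pq.1 pq.2 * ∫ t:ℝ, Eg σ μ (xi pq.1 pq.2) t) ≤ (∑ p ∈ P, f p)^2 * B := by
    calc norm (∑ pq ∈ (P ×ˢ P).filter
        (fun pq : (ℕ×ℕ)×(ℕ×ℕ) => ¬ (pq.1.1*pq.1.2 = pq.2.1*pq.2.2)),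
        w pq.1 pq.2 * ∫ t:ℝ, Eg σ μ (xi pq.1 pq.2) t)
        ≤ ∑ pq ∈ (P ×ˢ P).filter
          (fun pq : (ℕ×ℕ)×(ℕ×ℕ) => ¬ (pq.1.1*pq.1.2 = pq.2.1*pq.2.2)),
          norm (w pq.1 pq.2 * ∫ t:ℝ, Eg σ μ (xi pq.1 pq.2) t) :=
        norm_sum_le _ _
      _ ≤ ∑ pq ∈ (P ×ˢ P).filter
          (fun pq : (ℕ×ℕ)×(ℕ×ℕ) => ¬ (pq.1.1*pq.1.2 = pq.2.1*pq.2.2)),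
          norm (w pq.1 pq.2) * B := Finset.sum_le_sum hterm
      _ = (∑ pq ∈ (P ×ˢ P).filter
          (fun pq : (ℕ×ℕ)×(ℕ×ℕ) => ¬ (pq.1.1*pq.1.2 = pq.2.1*pq.2.2)),
          norm (w pq.1 pq.2)) * B := by rw [Finset.sum_mul]
      _ ≤ (∑ pq ∈ P ×ˢ P, norm (w pq.1 pq.2)) * B := by
          refine mul_le_mul_of_nonneg_right ?_ hB0
          exact Finset.sum_le_sum_of_subset_of_nonneg (Finset.filter_subset _ _)
            (fun i _ _ => norm_nonneg _)
      _ = (∑ p ∈ P, f p)^2 * B := by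
          congr 1
          rw [Finset.sum_product, sq, Finset.sum_mul_sum]
          exact Finset.sum_congr rfl fun p _ => Finset.sum_congr rfl fun q _ => hwabs p q
  have hfP : 0 ≤ ∑ p ∈ P, f p := Finset.sum_nonneg fun p _ => hf0 p
  have hfbound : ∑ p ∈ P, f p ≤
      (∑ k ∈ Icc 1 N, norm (a k) * (k:ℝ)^(-(1/2:ℝ))) *
      (∑ n ∈ Icc 1 N, norm (r n) * (n:ℝ)^(-(1/2:ℝ))) := by
    have hsub : ∑ p ∈ P, f p ≤ ∑ p ∈ Icc 1 N ×ˢ Icc 1 N, f p := by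
      rw [hPdef]
      exact Finset.sum_le_sum_of_subset_of_nonneg (Finset.filter_subset _ _)
        (fun i _ _ => hf0 i)
    calc ∑ p ∈ P, f p ≤ ∑ p ∈ Icc 1 N ×ˢ Icc 1 N, f p := hsub
      _ = _ := by
        rw [Finset.sum_product, Finset.sum_mul_sum]
        refine Finset.sum_congr rfl fun k _ => Finset.sum_congr rfl fun n _ => ?_
        simp only [hfdef, hcdef, norm_mul]
        have hsplit : ((k*n:ℕ):ℝ)^(-(1/2:ℝ)) = (k:ℝ)^(-(1/2:ℝ)) * (n:ℝ)^(-(1/2:ℝ)) := by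
          push_cast
          exact Real.mul_rpow (Nat.cast_nonneg _) (Nat.cast_nonneg _)
        rw [hsplit]
        ring
  have hCSa := CS_bound a N
  have hCSr := CS_bound r N
  have hS1a' : S1 a L = ∑ k ∈ Icc 1 N, norm (a k)^2 / k := by rw [S1, ← hNdef]
  have hS1r' : S1 r L = ∑ k ∈ Icc 1 N, norm (r k)^2 / k := by rw [S1, ← hNdef]
  have hS1a0 : 0 ≤ S1 a L := by
    rw [hS1a']; exact Finset.sum_nonneg fun n _ => by positivity
  have hS1r0 : 0 ≤ S1 r L := by
    rw [hS1r']; exact Finset.sum_nonneg fun n _ => by positivity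
  have hNT' : (N:ℝ) ≤ T := by
    refine le_trans hNL (le_trans hLT (div_le_self hT0.le ?_))
    nlinarith
  have hpow : T^(3:ℕ) * T^(-(8:ℝ)) = T^(-(5:ℝ)) := by
    rw [← Real.rpow_natCast T 3, ← Real.rpow_add hT0]
    norm_num
  have hT5 : T^(-(5:ℝ)) ≤ 1/T := by
    rw [show (1/T) = T^(-(1:ℝ)) by rw [Real.rpow_neg_one, one_div]]
    exact Real.rpow_le_rpow_of_exponent_le hT1.le (by norm_num)
  have hBle : B ≤ 3 * (T * T^(-(8:ℝ))) := by
    rw [hBdef]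
    have h1 : Real.sqrt (2*Real.pi) ≤ 3 := by
      rw [show (3:ℝ) = Real.sqrt 9 by
        rw [show (9:ℝ) = 3^2 by norm_num, Real.sqrt_sq (by norm_num)]]
      exact Real.sqrt_le_sqrt (by nlinarith [Real.pi_le_four])
    have h2 : σ ≤ T := by
      rw [hσdef]; exact div_le_self hT0.le (by linarith)
    have h3 : Real.exp (-(Real.log T^2/8)) ≤ T^(-(8:ℝ)) := by
      rw [Real.rpow_def_of_pos hT0]
      exact Real.exp_le_exp.2 (by nlinarith)
    calc Real.sqrt (2*Real.pi) * σ * Real.exp (-(Real.log T^2/8))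
        ≤ 3 * T * T^(-(8:ℝ)) :=
          mul_le_mul (mul_le_mul h1 h2 hσ.le (by norm_num)) h3 (Real.exp_pos _).le
            (by positivity)
      _ = 3 * (T * T^(-(8:ℝ))) := by ring
  have hstep : (N:ℝ)^2 * B ≤ 3 * (1/T) := by
    calc (N:ℝ)^2 * B ≤ T^2 * (3 * (T * T^(-(8:ℝ)))) :=
        mul_le_mul (pow_le_pow_left₀ (Nat.cast_nonneg N) hNT' 2) hBle hB0 (by positivity)
      _ = 3 * (T^(3:ℕ) * T^(-(8:ℝ))) := by ring
      _ = 3 * T^(-(5:ℝ)) := by rw [hpow]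
      _ ≤ 3 * (1/T) := by linarith
  calc norm (∑ pq ∈ (P ×ˢ P).filter
      (fun pq : (ℕ×ℕ)×(ℕ×ℕ) => ¬ (pq.1.1*pq.1.2 = pq.2.1*pq.2.2)),
      w pq.1 pq.2 * ∫ t:ℝ, Eg σ μ (xi pq.1 pq.2) t)
      ≤ (∑ p ∈ P, f p)^2 * B := hchain1
    _ ≤ ((N:ℝ) * S1 a L * ((N:ℝ) * S1 r L)) * B := by
        refine mul_le_mul_of_nonneg_right ?_ hB0
        calc (∑ p ∈ P, f p)^2
            ≤ ((∑ k ∈ Icc 1 N, norm (a k) * (k:ℝ)^(-(1/2:ℝ))) *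
              (∑ n ∈ Icc 1 N, norm (r n) * (n:ℝ)^(-(1/2:ℝ))))^2 :=
            pow_le_pow_left₀ hfP hfbound 2
          _ = (∑ k ∈ Icc 1 N, norm (a k) * (k:ℝ)^(-(1/2:ℝ)))^2 *
              (∑ n ∈ Icc 1 N, norm (r n) * (n:ℝ)^(-(1/2:ℝ)))^2 := by ring
          _ ≤ ((N:ℝ) * S1 a L) * ((N:ℝ) * S1 r L) := by
              rw [hS1a', hS1r']
              exact mul_le_mul hCSa hCSr (sq_nonneg _)
                (by positivity)
          _ = (N:ℝ) * S1 a L * ((N:ℝ) * S1 r L) := by ring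
    _ ≤ 3 * (1/T * S1 a L * S1 r L) := by
        calc ((N:ℝ) * S1 a L * ((N:ℝ) * S1 r L)) * B
            = (S1 a L * S1 r L) * ((N:ℝ)^2 * B) := by ring
          _ ≤ (S1 a L * S1 r L) * (3 * (1/T)) :=
              mul_le_mul_of_nonneg_left hstep (mul_nonneg hS1a0 hS1r0)
          _ = 3 * (1/T * S1 a L * S1 r L) := by ring

end
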